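/- Let α ∈ F (r + 1) (V 1) for some r ∈ ℕ, and let d^α x := d x + ⁅α, x⁆ be the twisted differential. Then for every integer p and every degree n ∈ ℤ, the following two conditions are equivalent: (i) for every z ∈ F p (V n) with d z ∈ F (p + r + 1) (V (n+1)) there exists y ∈ F (p − r) (V (n−1)) with d y ∈ F p (V n) and z − d y ∈ F (p + 1) (V n); (ii) the same condition with d replaced by d^α. (Curved differential graded Lie algebra case of the lemma that twisting by an element of filtration degree r + 1 preserves the vanishing of the (r+1)-st page of the spectral sequence.) -/
import Mathlib


/-- Transport an element of a `ℤ`-graded family along an equality of degrees. -/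
def gcast {V : ℤ → Type*} {m n : ℤ} (h : m = n) (x : V m) : V n := h ▸ x


lemma gcast_add {V : ℤ → Type*} [∀ n, AddCommGroup (V n)] {m n : ℤ} (h : m = n)
    (a b : V m) : gcast (V := V) h (a + b) = gcast h a + gcast h b := by
  subst h; rfl

lemma gcast_gcast {V : ℤ → Type*} {m n k : ℤ} (h1 : m = n) (h2 : n = k) (x : V m) :
    gcast (V := V) h2 (gcast h1 x) = gcast (h1.trans h2) x := by
  subst h1; subst h2; rfl

lemma gcast_mem {K : Type*} [Field K] {V : ℤ → Type*} [∀ n, AddCommGroup (V n)]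
    [∀ n, Module K (V n)] (F : ℤ → ∀ n : ℤ, Submodule K (V n)) {m n : ℤ} (h : m = n)
    {q : ℤ} {x : V m} (hx : x ∈ F q m) : gcast (V := V) h x ∈ F q n := by
  subst h; exact hx

/-- Let `(V, d, ⁅·,·⁆, ω)` be a curved differential graded Lie algebra over a
field `K` of characteristic `0` with a compatible descending filtration `F` (with `F j = ⊤`
for `j ≤ 1`).  Let `α ∈ F (r + 1) (V 1)` and let `d^α x = d x + ⁅α, x⁆` be the twisted
differential.  Then for every `p n : ℤ` the vanishing condition for the `(r+1)`-st page
holds for `d` iff it holds for `d^α`: twisting by an element of filtration degree `r + 1`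
preserves the vanishing of the `(r+1)`-st page of the spectral sequence. -/
theorem twist_preserves_page_vanishing
    {K : Type*} [Field K] [CharZero K]
    (V : ℤ → Type*) [∀ n, AddCommGroup (V n)] [∀ n, Module K (V n)]
    (d : ∀ n : ℤ, V n →ₗ[K] V (n + 1))
    (br : ∀ m n : ℤ, V m →ₗ[K] V n →ₗ[K] V (m + n))
    (ω : V 2)
    (hanti : ∀ (m n : ℤ) (x : V m) (y : V n),
      br m n x y = - (-1 : K) ^ (m * n) • gcast (V := V) (add_comm n m) (br n m y x))
    (hjac : ∀ (m n k : ℤ) (x : V m) (y : V n) (z : V k),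
      br m (n + k) x (br n k y z)
        = gcast (V := V) (show m + n + k = m + (n + k) by ring) (br (m + n) k (br m n x y) z)
          + (-1 : K) ^ (m * n) •
            gcast (V := V) (show n + (m + k) = m + (n + k) by ring) (br n (m + k) y (br m k x z)))
    (hleib : ∀ (m n : ℤ) (x : V m) (y : V n),
      d (m + n) (br m n x y)
        = gcast (V := V) (show m + 1 + n = m + n + 1 by ring) (br (m + 1) n (d m x) y)
          + (-1 : K) ^ m •
            gcast (V := V) (show m + (n + 1) = m + n + 1 by ring) (br m (n + 1) x (d n y)))
    (hdω : d 2 ω = 0)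
    (hdd : ∀ (n : ℤ) (x : V n),
      d (n + 1) (d n x) = gcast (V := V) (show (2 : ℤ) + n = n + 1 + 1 by ring) (br 2 n ω x))
    (F : ℤ → ∀ n : ℤ, Submodule K (V n))
    (hFanti : ∀ p q : ℤ, p ≤ q → ∀ n : ℤ, F q n ≤ F p n)
    (hFtop : ∀ j : ℤ, j ≤ 1 → ∀ n : ℤ, F j n = ⊤)
    (hFd : ∀ (p n : ℤ), ∀ x ∈ F p n, d n x ∈ F p (n + 1))
    (hFbr : ∀ (p q m n : ℤ), ∀ x ∈ F p m, ∀ y ∈ F q n, br m n x y ∈ F (p + q) (m + n))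
    (r : ℕ) (α : V 1) (hα : α ∈ F ((r : ℤ) + 1) 1)
    (dα : ∀ n : ℤ, V n → V (n + 1))
    (hdα : ∀ (n : ℤ) (x : V n),
      dα n x = d n x + gcast (V := V) (show (1 : ℤ) + n = n + 1 by ring) (br 1 n α x)) :
    ∀ p n : ℤ,
      (∀ z ∈ F p n, d n z ∈ F (p + (r : ℤ) + 1) (n + 1) →
        ∃ y ∈ F (p - (r : ℤ)) (n - 1),
          gcast (V := V) (show n - 1 + 1 = n by ring) (d (n - 1) y) ∈ F p n ∧
          z - gcast (V := V) (show n - 1 + 1 = n by ring) (d (n - 1) y) ∈ F (p + 1) n) ↔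
      (∀ z ∈ F p n, dα n z ∈ F (p + (r : ℤ) + 1) (n + 1) →
        ∃ y ∈ F (p - (r : ℤ)) (n - 1),
          gcast (V := V) (show n - 1 + 1 = n by ring) (dα (n - 1) y) ∈ F p n ∧
          z - gcast (V := V) (show n - 1 + 1 = n by ring) (dα (n - 1) y) ∈ F (p + 1) n) := by
  intro p n
  have hn : n - 1 + 1 = n := by ring
  have hn1 : (1 : ℤ) + (n - 1) = n - 1 + 1 := by ring
  have hn2 : (1 : ℤ) + n = n + 1 := by ring
  constructor
  · intro H z hz hdz
    have hbrz : gcast (V := V) hn2 (br 1 n α z) ∈ F (p + (r : ℤ) + 1) (n + 1) := by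
      have h1 := gcast_mem F hn2 (hFbr ((r : ℤ) + 1) p 1 n α hα z hz)
      have he : (r : ℤ) + 1 + p = p + (r : ℤ) + 1 := by ring
      rwa [he] at h1
    have hdz' : d n z ∈ F (p + (r : ℤ) + 1) (n + 1) := by
      have heq : d n z = dα n z - gcast hn2 (br 1 n α z) := by rw [hdα]; abel
      rw [heq]; exact Submodule.sub_mem _ hdz hbrz
    obtain ⟨y, hy, h1, h2⟩ := H z hz hdz'
    have hbry : gcast (V := V) hn (gcast hn1 (br 1 (n - 1) α y)) ∈ F (p + 1) n := by
      have h3 := gcast_mem F hn (gcast_mem F hn1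
        (hFbr ((r : ℤ) + 1) (p - (r : ℤ)) 1 (n - 1) α hα y hy))
      have he : (r : ℤ) + 1 + (p - (r : ℤ)) = p + 1 := by ring
      rwa [he] at h3
    have keyy : gcast (V := V) hn (dα (n - 1) y)
        = gcast hn (d (n - 1) y) + gcast hn (gcast hn1 (br 1 (n - 1) α y)) := by
      rw [hdα, gcast_add]
    refine ⟨y, hy, ?_, ?_⟩
    · rw [keyy]
      exact Submodule.add_mem _ h1 (hFanti p (p + 1) (by linarith) n hbry)
    · rw [keyy]
      have heq : z - (gcast (V := V) hn (d (n - 1) y) + gcast hn (gcast hn1 (br 1 (n - 1) α y)))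
          = (z - gcast hn (d (n - 1) y)) - gcast hn (gcast hn1 (br 1 (n - 1) α y)) := by abel
      rw [heq]; exact Submodule.sub_mem _ h2 hbry
  · intro H z hz hdz
    have hbrz : gcast (V := V) hn2 (br 1 n α z) ∈ F (p + (r : ℤ) + 1) (n + 1) := by
      have h1 := gcast_mem F hn2 (hFbr ((r : ℤ) + 1) p 1 n α hα z hz)
      have he : (r : ℤ) + 1 + p = p + (r : ℤ) + 1 := by ring
      rwa [he] at h1
    have hdz' : dα n z ∈ F (p + (r : ℤ) + 1) (n + 1) := by
      rw [hdα]; exact Submodule.add_mem _ hdz hbrz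
    obtain ⟨y, hy, h1, h2⟩ := H z hz hdz'
    have hbry : gcast (V := V) hn (gcast hn1 (br 1 (n - 1) α y)) ∈ F (p + 1) n := by
      have h3 := gcast_mem F hn (gcast_mem F hn1
        (hFbr ((r : ℤ) + 1) (p - (r : ℤ)) 1 (n - 1) α hα y hy))
      have he : (r : ℤ) + 1 + (p - (r : ℤ)) = p + 1 := by ring
      rwa [he] at h3
    have keyy : gcast (V := V) hn (d (n - 1) y)
        = gcast hn (dα (n - 1) y) - gcast hn (gcast hn1 (br 1 (n - 1) α y)) := by
      rw [hdα, gcast_add]; abel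
    refine ⟨y, hy, ?_, ?_⟩
    · rw [keyy]
      exact Submodule.sub_mem _ h1 (hFanti p (p + 1) (by linarith) n hbry)
    · rw [keyy]
      have heq : z - (gcast (V := V) hn (dα (n - 1) y) - gcast hn (gcast hn1 (br 1 (n - 1) α y)))
          = (z - gcast hn (dα (n - 1) y)) + gcast hn (gcast hn1 (br 1 (n - 1) α y)) := by abel
      rw [heq]; exact Submodule.add_mem _ h2 hbry
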